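/- arXiv:2204.08141 — 2 statements merged into one kernel-verified Lean document; each statement's English description precedes it below -/
import Mathlib

section
/- Under the bijection of dimension vectors with positive roots of type BC_n, the fiber over each root has size: exactly one indecomposable for roots ε_i - ε_j, ε_i, and 2ε_i, and exactly two indecomposables (namely U_{i,j} and U_{j,i}) for roots ε_i + ε_j with i < j. Consequently the total number of isomorphism classes of indecomposable Λ(n-1,1,1)-modules is n(n-1)/2 + n + n + 2·n(n-1)/2 = (3n² + n)/2. -/
/-- The standard basis vector ε_i of ℝ^n. -/
noncomputable def eps {n : ℕ} (i : Fin n) : Fin n → ℝ := Pi.single i 1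

/-- The standard basis vector e_i of ℤ^n. -/
def e {n : ℕ} (i : Fin n) : Fin n → ℤ := Pi.single i 1

/-- The parametrizing set of the indecomposable Λ(n-1,1,1)-modules:
U_{i,j} (1≤i,j≤n), V_i (1≤i≤n), W_{i,j} (1≤i≤j≤n-1) (0-indexed). -/
abbrev IndParam (n : ℕ) :=
  (Fin n × Fin n) ⊕ (Fin n ⊕ {p : Fin n × Fin n // p.1 ≤ p.2 ∧ p.2.val + 1 < n})

/-- The dimension vector of each indecomposable. -/
def dimVec {n : ℕ} : IndParam n → Fin n → ℤ
  | .inl (i, j) => (∑ k ∈ Finset.Ici i, e k) + ∑ k ∈ Finset.Ici j, e k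
  | .inr (.inl i) => ∑ k ∈ Finset.Ici i, e k
  | .inr (.inr p) => ∑ k ∈ Finset.Icc p.1.1 p.1.2, e k

/-- The linear map ℤ^n → ℝ^n sending e_i ↦ ε_i - ε_{i+1} (i < n), e_n ↦ ε_n. -/
noncomputable def toRoot {n : ℕ} (v : Fin n → ℤ) : Fin n → ℝ :=
  ∑ i : Fin n, (v i : ℝ) •
    (if h : i.val + 1 < n then eps i - eps ⟨i.val + 1, h⟩ else eps i)

/-- The root attached to an indecomposable module. -/
noncomputable def rootOf {n : ℕ} (m : IndParam n) : Fin n → ℝ := toRoot (dimVec m)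

/-!
The root map is a first-difference operator, `(toRoot v)_x = v_x - v_{x-1}`, and the dimension
vectors are sums of indicators of intervals, so it telescopes: `U_{i,j} ↦ ε_i + ε_j`,
`V_i ↦ ε_i`, `W_{i,j} ↦ ε_i - ε_{j+1}`. The three families are told apart by the coordinate sum
of the root (2, 1 and 0), and within a family the root determines the index, up to the swap
`U_{i,j} ↔ U_{j,i}`. Hence `n² + n + n(n-1)/2` indecomposables in all.
-/

variable {n : ℕ}

lemma eps_injective : Function.Injective (eps : Fin n → Fin n → ℝ) := fun i j h => by
  simpa [eps, Pi.single_apply, eq_comm] using congrFun h i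

lemma eps_add_eps_eq_eps_add_eps_iff {a b c d : Fin n} :
    eps a + eps b = eps c + eps d ↔ a = c ∧ b = d ∨ a = d ∧ b = c := by
  simpa [eps] using Pi.single_add_single_eq_single_add_single (k := a) (l := b) (m := c) (n := d)
    (one_ne_zero' ℝ) (one_ne_zero' ℝ)

lemma eps_sub_eps_eq_eps_sub_eps_iff {a b c d : Fin n} (hab : a ≠ b) :
    eps a - eps b = eps c - eps d ↔ a = c ∧ b = d := by
  rw [sub_eq_sub_iff_add_eq_add, eps_add_eps_eq_eps_add_eps_iff]
  grind

lemma sum_eps (i : Fin n) : ∑ x, eps i x = 1 := by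
  simp [eps]

lemma sum_e_apply (s : Finset (Fin n)) (x : Fin n) :
    (∑ k ∈ s, e k) x = if x ∈ s then 1 else 0 := by
  simp [e, Finset.sum_apply, Finset.sum_pi_single]

lemma toRoot_apply (v : Fin n → ℤ) (x : Fin n) :
    toRoot v x = v x - if h : 0 < x.val then (v ⟨x - 1, by omega⟩ : ℝ) else 0 := by
  have summand (i : Fin n) :
      (if h : i.val + 1 < n then eps i - eps ⟨i + 1, h⟩ else eps i) x =
        (if x = i then 1 else 0) - if x.val = i.val + 1 then 1 else 0 := by
    by_cases h : i.val + 1 < n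
    · simp [h, eps, Pi.single_apply, Fin.ext_iff]
    · simp [h, eps, Pi.single_apply, show x.val ≠ i.val + 1 by omega]
  simp only [toRoot, Finset.sum_apply, Pi.smul_apply, smul_eq_mul, summand, mul_sub,
    Finset.sum_sub_distrib, mul_ite, mul_one, mul_zero, Finset.sum_ite_eq, Finset.mem_univ,
    if_true]
  congr 1
  split_ifs with hx
  · refine (Finset.sum_eq_single_of_mem ⟨x - 1, by omega⟩ (Finset.mem_univ _)
      fun i _ hi => if_neg ?_).trans (if_pos ?_)
    · simp only [ne_eq, Fin.ext_iff] at hi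
      omega
    · simp only
      omega
  · exact Finset.sum_eq_zero fun i _ => if_neg (by omega)

lemma rootOf_inl (i j : Fin n) : rootOf (.inl (i, j)) = eps i + eps j := by
  ext x
  simp only [rootOf, dimVec, toRoot_apply, Pi.add_apply, sum_e_apply, Finset.mem_Ici, eps,
    Pi.single_apply, Fin.le_def, Fin.ext_iff]
  split_ifs <;> push_cast <;> norm_num <;> omega

lemma rootOf_inr_inl (i : Fin n) : rootOf (.inr (.inl i)) = eps i := by
  ext x
  simp only [rootOf, dimVec, toRoot_apply, sum_e_apply, Finset.mem_Ici, eps, Pi.single_apply,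
    Fin.le_def, Fin.ext_iff]
  split_ifs <;> push_cast <;> norm_num <;> omega

variable (n) in
/-- `W_{i,j}` has root `ε_i - ε_{j+1}`, so shifting `j` indexes the `W`'s by the pairs `i < j`. -/
def succSndEquiv :
    {p : Fin n × Fin n // p.1 ≤ p.2 ∧ p.2.val + 1 < n} ≃ {p : Fin n × Fin n // p.1 < p.2} where
  toFun p := ⟨(p.1.1, ⟨p.1.2 + 1, p.2.2⟩), Fin.lt_def.2 (Nat.lt_succ_of_le p.2.1)⟩
  invFun q := ⟨(q.1.1, ⟨q.1.2 - 1, by omega⟩), by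
    have := q.2
    constructor <;> simp only [Fin.le_def, Fin.lt_def] at this ⊢ <;> omega⟩
  left_inv p := by ext <;> simp
  right_inv q := by
    have := Fin.lt_def.1 q.2
    ext <;> simp only
    omega

lemma rootOf_inr_inr (p : {p : Fin n × Fin n // p.1 ≤ p.2 ∧ p.2.val + 1 < n}) :
    rootOf (.inr (.inr p)) = eps (succSndEquiv n p).1.1 - eps (succSndEquiv n p).1.2 := by
  obtain ⟨⟨a, b⟩, hab, hb⟩ := p
  ext x
  simp only [rootOf, dimVec, toRoot_apply, sum_e_apply, Finset.mem_Icc, Pi.sub_apply, eps,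
    Pi.single_apply, succSndEquiv, Equiv.coe_fn_mk, Fin.le_def, Fin.ext_iff]
  simp only [Fin.le_def] at hab hb
  split_ifs <;> push_cast <;> norm_num <;> omega

lemma rootOf_eq_eps_add_eps_iff (m : IndParam n) (i j : Fin n) :
    rootOf m = eps i + eps j ↔ m = .inl (i, j) ∨ m = .inl (j, i) := by
  constructor
  · intro h
    have hsum := congrArg (∑ x, · x) h
    rcases m with ⟨a, b⟩ | a | p
    · rw [rootOf_inl, eps_add_eps_eq_eps_add_eps_iff] at h
      grind
    · norm_num [rootOf_inr_inl, Finset.sum_add_distrib, sum_eps] at hsum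
    · norm_num [rootOf_inr_inr, Finset.sum_add_distrib, sum_eps] at hsum
  · rintro (rfl | rfl)
    · exact rootOf_inl i j
    · rw [rootOf_inl, add_comm]

lemma rootOf_eq_eps_iff (m : IndParam n) (i : Fin n) : rootOf m = eps i ↔ m = .inr (.inl i) := by
  constructor
  · intro h
    have hsum := congrArg (∑ x, · x) h
    rcases m with ⟨a, b⟩ | a | p
    · norm_num [rootOf_inl, Finset.sum_add_distrib, sum_eps] at hsum
    · rw [rootOf_inr_inl] at h
      rw [eps_injective h]
    · norm_num [rootOf_inr_inr, Finset.sum_add_distrib, sum_eps] at hsum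
  · rintro rfl
    exact rootOf_inr_inl i

lemma rootOf_eq_eps_sub_eps_iff (m : IndParam n) (q : {p : Fin n × Fin n // p.1 < p.2}) :
    rootOf m = eps q.1.1 - eps q.1.2 ↔ m = .inr (.inr ((succSndEquiv n).symm q)) := by
  constructor
  · intro h
    have hsum := congrArg (∑ x, · x) h
    rcases m with ⟨a, b⟩ | a | p
    · norm_num [rootOf_inl, Finset.sum_add_distrib, sum_eps] at hsum
    · norm_num [rootOf_inr_inl, Finset.sum_add_distrib, sum_eps] at hsum
    · rw [rootOf_inr_inr, eps_sub_eps_eq_eps_sub_eps_iff (succSndEquiv n p).2.ne] at h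
      rw [← Equiv.symm_apply_apply (succSndEquiv n) p, Subtype.ext (Prod.ext h.1 h.2)]
  · rintro rfl
    rw [rootOf_inr_inr, Equiv.apply_symm_apply]

lemma two_mul_card_indParam : 2 * Nat.card (IndParam n) = 3 * n ^ 2 + n := by
  have hcard : Nat.card (IndParam n) = n * n + (n + n.choose 2) := by
    simp [Nat.card_eq_fintype_card, Fintype.card_congr (succSndEquiv n), Fintype.card_subtype,
      Fintype.card_product_filter_lt]
  rw [hcard]
  cases n with
  | zero => rfl
  | succ m =>
    have hchoose := Nat.add_one_mul_choose_eq m 1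
    rw [Nat.choose_one_right] at hchoose
    grind

/-- the fibers of the map indecomposables → positive roots of type
BC_n have cardinality one over ε_i-ε_j, ε_i and 2ε_i, and cardinality two
(consisting of U_{i,j} and U_{j,i}) over ε_i+ε_j (i<j); consequently the number
of indecomposables is (3n²+n)/2. -/
theorem stmt_6 (n : ℕ) :
    (∀ i j : Fin n, i < j → {m : IndParam n | rootOf m = eps i - eps j}.ncard = 1) ∧
    (∀ i : Fin n, {m : IndParam n | rootOf m = eps i}.ncard = 1) ∧
    (∀ i : Fin n, {m : IndParam n | rootOf m = (2 : ℝ) • eps i}.ncard = 1) ∧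
    (∀ i j : Fin n, i < j →
      {m : IndParam n | rootOf m = eps i + eps j} =
        {Sum.inl (i, j), Sum.inl (j, i)}) ∧
    2 * Nat.card (IndParam n) = 3 * n ^ 2 + n := by
  refine ⟨fun i j hij => ?_, fun i => ?_, fun i => ?_, fun i j _ => ?_, two_mul_card_indParam⟩
  · exact Set.ncard_eq_one.2 ⟨_, Set.ext fun m => rootOf_eq_eps_sub_eps_iff m ⟨(i, j), hij⟩⟩
  · exact Set.ncard_eq_one.2 ⟨_, Set.ext fun m => rootOf_eq_eps_iff m i⟩
  · simp_rw [two_smul, rootOf_eq_eps_add_eps_iff, or_self]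
    exact Set.ncard_singleton _
  · exact Set.ext fun m => rootOf_eq_eps_add_eps_iff m i j
end

section
/- In the Lie algebra L(A)⊗ℂ with the bracket of Proposition 4.2, the subspace spanned by V_i (1≤i≤n) and U_{j,i} − U_{i,j} (1≤i<j≤n) is a Lie ideal. -/
/-!
The bracket is bilinear and antisymmetric (`cst R b a = -cst R a b`), so it suffices to bracket
basis elements with the spanning vectors `V_i` and `U_{j,i} - U_{i,j}`. The `U`'s are central
except for `W`, and `[W_{k,l}, -]` sends `V_i` to `0` or `V_k` and `U_{j,i} - U_{i,j}` to a sum of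
at most two vectors of the same skew form; finally `[V_l, V_i] = U_{i,l} - U_{l,i}`.
-/

/-- Index set of the isomorphism classes of indecomposable Λ(n-1,1,1)-modules:
`Sum.inl (i,j)` is U_{i,j} (1≤i,j≤n), `Sum.inr (Sum.inl i)` is V_i, and
`Sum.inr (Sum.inr ⟨(i,j),_⟩)` is W_{i,j} (1≤i≤j≤n-1), all 0-indexed. -/
abbrev LIdx (n : ℕ) :=
  (Fin n × Fin n) ⊕ (Fin n ⊕ {p : Fin n × Fin n // p.1 ≤ p.2 ∧ p.2.val + 1 < n})

/-- Structure constants of Riedtmann's Lie algebra of Λ(n-1,1,1)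
(Proposition 4.2 of the paper). -/
noncomputable def cst {n : ℕ} (R : Type) [CommRing R] :
    LIdx n → LIdx n → (LIdx n →₀ R)
  | .inr (.inr p), .inr (.inr q) =>
      (if h : p.1.2.val + 1 = q.1.1.val then
        Finsupp.single (.inr (.inr ⟨(p.1.1, q.1.2), by
          obtain ⟨h1, _⟩ := p.2; obtain ⟨h2, h3⟩ := q.2
          refine ⟨?_, h3⟩
          change p.1.1 ≤ q.1.2
          rw [Fin.le_def] at h1 h2 ⊢
          omega⟩)) (1 : R)
      else 0)
      - (if h : q.1.2.val + 1 = p.1.1.val then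
        Finsupp.single (.inr (.inr ⟨(q.1.1, p.1.2), by
          obtain ⟨h1, h4⟩ := p.2; obtain ⟨h2, _⟩ := q.2
          refine ⟨?_, h4⟩
          change q.1.1 ≤ p.1.2
          rw [Fin.le_def] at h1 h2 ⊢
          omega⟩)) (1 : R)
      else 0)
  | .inr (.inr p), .inr (.inl l) =>
      if p.1.2.val + 1 = l.val then Finsupp.single (.inr (.inl p.1.1)) (1 : R) else 0
  | .inr (.inl l), .inr (.inr p) =>
      -(if p.1.2.val + 1 = l.val then Finsupp.single (.inr (.inl p.1.1)) (1 : R) else 0)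
  | .inr (.inr p), .inl (l, m) =>
      (if p.1.2.val + 1 = m.val then Finsupp.single (.inl (l, p.1.1)) (1 : R) else 0)
      + (if p.1.2.val + 1 = l.val then Finsupp.single (.inl (p.1.1, m)) (1 : R) else 0)
  | .inl (l, m), .inr (.inr p) =>
      -((if p.1.2.val + 1 = m.val then Finsupp.single (.inl (l, p.1.1)) (1 : R) else 0)
        + (if p.1.2.val + 1 = l.val then Finsupp.single (.inl (p.1.1, m)) (1 : R) else 0))
  | .inr (.inl i), .inr (.inl j) =>
      Finsupp.single (.inl (j, i)) (1 : R) - Finsupp.single (.inl (i, j)) (1 : R)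
  | _, _ => 0

/-- The bilinear bracket on the free module on the indecomposables determined by
the structure constants of Proposition 4.2. -/
noncomputable def brkt {n : ℕ} {R : Type} [CommRing R] (x y : LIdx n →₀ R) :
    LIdx n →₀ R :=
  Finsupp.sum x fun a r => Finsupp.sum y fun b s => (r * s) • cst R a b

/-- Basis element U_{i,j}. -/
noncomputable def Ub {n : ℕ} (R : Type) [CommRing R] (i j : Fin n) : LIdx n →₀ R :=
  Finsupp.single (.inl (i, j)) 1

/-- Basis element V_i. -/
noncomputable def Vb {n : ℕ} (R : Type) [CommRing R] (i : Fin n) : LIdx n →₀ R :=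
  Finsupp.single (.inr (.inl i)) 1

/-- Basis element W_{i,j} (i ≤ j ≤ n-1, 0-indexed j+1 < n). -/
noncomputable def Wb {n : ℕ} (R : Type) [CommRing R] (i j : Fin n)
    (h : i ≤ j ∧ j.val + 1 < n) : LIdx n →₀ R :=
  Finsupp.single (.inr (.inr ⟨(i, j), h⟩)) 1

/-- The span of the elements V_i (1≤i≤n) and U_{j,i} − U_{i,j} (1≤i<j≤n). -/
noncomputable def idealC (n : ℕ) : Submodule ℂ (LIdx n →₀ ℂ) :=
  Submodule.span ℂ
    ({m | ∃ i : Fin n, m = Vb ℂ i} ∪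
      {m | ∃ i j : Fin n, i < j ∧ m = Ub ℂ j i - Ub ℂ i j})

theorem LinearMap.apply_mem_of_forall_single_mem {R ι M P : Type*} [CommSemiring R]
    [AddCommMonoid M] [Module R M] [AddCommMonoid P] [Module R P]
    (B : (ι →₀ R) →ₗ[R] M →ₗ[R] P) {s : Set M} {I : Submodule R P}
    (h : ∀ a, ∀ m ∈ s, B (Finsupp.single a 1) m ∈ I) (x : ι →₀ R) {y : M}
    (hy : y ∈ Submodule.span R s) : B x y ∈ I := by
  have hB : Submodule.map₂ B ⊤ (Submodule.span R s) ≤ I := by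
    rw [← Finsupp.basisSingleOne.span_eq, Submodule.map₂_span_span, Submodule.span_le]
    rintro _ ⟨_, ⟨a, rfl⟩, m, hm, rfl⟩
    exact h a m hm
  exact Submodule.map₂_le.mp hB x trivial y hy

section Bracket

variable {n : ℕ} {R : Type} [CommRing R]

theorem cst_swap (a b : LIdx n) : cst R b a = -cst R a b := by
  rcases a with _ | _ | _ <;> rcases b with _ | _ | _ <;> simp [cst]

noncomputable def brktₗ (n : ℕ) (R : Type) [CommRing R] :
    (LIdx n →₀ R) →ₗ[R] (LIdx n →₀ R) →ₗ[R] (LIdx n →₀ R) :=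
  Finsupp.linearCombination R fun a => Finsupp.linearCombination R (cst R a)

theorem brktₗ_apply (x y : LIdx n →₀ R) : brktₗ n R x y = brkt x y := by
  simp only [brktₗ, brkt, Finsupp.linearCombination_apply, Finsupp.sum, LinearMap.sum_apply,
    LinearMap.smul_apply, Finset.smul_sum, smul_smul]

theorem brktₗ_single_single (a b : LIdx n) :
    brktₗ n R (Finsupp.single a 1) (Finsupp.single b 1) = cst R a b := by
  simp [brktₗ]

theorem brkt_swap (x y : LIdx n →₀ R) : brkt y x = -brkt x y := by
  rw [brkt, Finsupp.sum_comm]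
  simp only [brkt, Finsupp.sum, mul_comm, ← Finset.sum_neg_distrib, ← smul_neg, ← cst_swap]

end Bracket

section Ideal

variable {n : ℕ}

theorem Vb_mem_idealC (i : Fin n) : Vb ℂ i ∈ idealC n :=
  Submodule.subset_span (Or.inl ⟨i, rfl⟩)

theorem Ub_sub_Ub_mem_idealC (i j : Fin n) : Ub ℂ j i - Ub ℂ i j ∈ idealC n := by
  rcases lt_trichotomy i j with h | rfl | h
  · exact Submodule.subset_span (Or.inr ⟨i, j, h, rfl⟩)
  · simp
  · rw [← neg_sub]
    exact neg_mem (Submodule.subset_span (Or.inr ⟨j, i, h, rfl⟩))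

theorem cst_V_mem_idealC (a : LIdx n) (i : Fin n) : cst ℂ a (.inr (.inl i)) ∈ idealC n := by
  rcases a with _ | l | w
  · simp [cst]
  · exact Ub_sub_Ub_mem_idealC l i
  · simp only [cst]
    split_ifs
    · exact Vb_mem_idealC _
    · exact zero_mem _

theorem cst_U_sub_cst_U_mem_idealC (a : LIdx n) (i j : Fin n) :
    cst ℂ a (.inl (j, i)) - cst ℂ a (.inl (i, j)) ∈ idealC n := by
  rcases a with _ | _ | w
  · simp [cst]
  · simp [cst]
  · have key : cst ℂ (.inr (.inr w)) (.inl (j, i)) - cst ℂ (.inr (.inr w)) (.inl (i, j)) =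
        (if w.1.2.val + 1 = i.val then Ub ℂ j w.1.1 - Ub ℂ w.1.1 j else 0) +
          (if w.1.2.val + 1 = j.val then Ub ℂ w.1.1 i - Ub ℂ i w.1.1 else 0) := by
      simp only [cst, Ub]
      split_ifs <;> abel
    rw [key]
    refine add_mem ?_ ?_ <;> split_ifs <;> simp [Ub_sub_Ub_mem_idealC]

end Ideal

/-- in L(A)⊗ℂ, the subspace spanned by V_i (1≤i≤n) and
U_{j,i} − U_{i,j} (1≤i<j≤n) is a Lie ideal. -/
theorem stmt_16 (n : ℕ) :
    ∀ x : LIdx n →₀ ℂ, ∀ y ∈ idealC n,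
      brkt x y ∈ idealC n ∧ brkt y x ∈ idealC n := by
  intro x y hy
  have hxy : brkt x y ∈ idealC n := by
    rw [← brktₗ_apply]
    refine (brktₗ n ℂ).apply_mem_of_forall_single_mem (fun a m hm => ?_) x hy
    rcases hm with ⟨i, rfl⟩ | ⟨i, j, -, rfl⟩
    · rw [Vb, brktₗ_single_single]
      exact cst_V_mem_idealC a i
    · rw [map_sub, Ub, Ub, brktₗ_single_single, brktₗ_single_single]
      exact cst_U_sub_cst_U_mem_idealC a i j
  exact ⟨hxy, brkt_swap x y ▸ neg_mem hxy⟩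
end
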